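/- Assume (A1), h, τ > 0, and D : ℝ^d × [0,T] → ℝ bounded and nonnegative. Let (U^n) be a solution of the scheme (S) with bounded initial datum U^0. Then ‖U^n‖_{L^∞(ℝ^d)} ≤ ‖U^0‖_{L^∞(ℝ^d)} for all n ≥ 0 with t_n ≤ T. -/

import Mathlib

open MeasureTheory Real Filter Set

noncomputable section

/-- Discrete grid point `hβ` in `ℝ^d`. -/
def zvec (d : ℕ) (h : ℝ) (β : Fin d → ℤ) : EuclideanSpace ℝ (Fin d) :=
  WithLp.toLp 2 (fun i => h * (β i : ℝ))

/-- Assumption (A1): symmetric nonnegative summable weights. -/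
def A1 (d : ℕ) (ω : (Fin d → ℤ) → ℝ) : Prop :=
  (∀ β : Fin d → ℤ, ω β = ω (-β)) ∧ (∀ β : Fin d → ℤ, 0 ≤ ω β) ∧
    Summable (fun β : {β : Fin d → ℤ // β ≠ 0} => ω β.1)

/-- Assumption (A2): moment condition on the weights. -/
def A2 (d : ℕ) (h : ℝ) (ω : (Fin d → ℤ) → ℝ) (r Cr : ℝ) : Prop :=
  Summable (fun β : {β : Fin d → ℤ // β ≠ 0} => min (‖zvec d h β.1‖ ^ r) 1 * ω β.1) ∧
    ∑' β : {β : Fin d → ℤ // β ≠ 0}, min (‖zvec d h β.1‖ ^ r) 1 * ω β.1 ≤ Cr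

/-- The discrete diffusion operator `L_h`. -/
def Lh (d : ℕ) (h : ℝ) (ω : (Fin d → ℤ) → ℝ) (ψ : EuclideanSpace ℝ (Fin d) → ℝ)
    (x : EuclideanSpace ℝ (Fin d)) : ℝ :=
  ∑' β : {β : Fin d → ℤ // β ≠ 0},
    (ψ (x + zvec d h β.1) + ψ (x - zvec d h β.1) - 2 * ψ x) * ω β.1

/-- The L1 coefficients `b_i = (i+1)^{1-α} - i^{1-α}`. -/
def bcoef (α : ℝ) (i : ℕ) : ℝ := ((i : ℝ) + 1) ^ (1 - α) - (i : ℝ) ^ (1 - α)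

/-- The L1 discrete Caputo derivative of a sequence. -/
def capD (α τ : ℝ) (v : ℕ → ℝ) (n : ℕ) : ℝ :=
  (τ ^ (-α) / Real.Gamma (2 - α)) *
    (v n - bcoef α (n - 1) * v 0 -
      ∑ k ∈ Finset.Icc 1 (n - 1), (bcoef α (n - k - 1) - bcoef α (n - k)) * v k)

/-- The L1 discrete Riemann–Liouville derivative of a sequence. -/
def rlD (α τ : ℝ) (f : ℕ → ℝ) (n : ℕ) : ℝ :=
  (τ ^ (-α) / Real.Gamma (2 - α)) *
    (f n - ∑ k ∈ Finset.range n, (bcoef α (n - k - 1) - bcoef α (n - k)) * f k)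

/-- Solution of the numerical scheme (S) on `[0,T]`:
a sequence of bounded functions satisfying the L1/`L_h` equation. -/
def SchemeSol (d : ℕ) (h τ α T : ℝ) (ω : (Fin d → ℤ) → ℝ)
    (D : EuclideanSpace ℝ (Fin d) → ℝ → ℝ)
    (U : ℕ → EuclideanSpace ℝ (Fin d) → ℝ) : Prop :=
  (∀ n : ℕ, (n : ℝ) * τ ≤ T → ∃ M : ℝ, ∀ x, |U n x| ≤ M) ∧
  (∀ n : ℕ, 1 ≤ n → (n : ℝ) * τ ≤ T → ∀ x,
    capD α τ (fun m => U m x) n = D x ((n : ℝ) * τ) * Lh d h ω (U n) x)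

/-- `‖φ‖_{X^r} ≤ K`, encoded via decomposed bounds. -/
def XNormLe (d : ℕ) (r K : ℝ) (φ : EuclideanSpace ℝ (Fin d) → ℝ) : Prop :=
  if r = 0 then ∀ x, |φ x| ≤ K
  else if r ≤ 1 then
    ∃ A B : ℝ, A + B ≤ K ∧ (∀ x, |φ x| ≤ A) ∧
      ∀ x y : EuclideanSpace ℝ (Fin d), x ≠ y → |φ x - φ y| ≤ B * ‖x - y‖ ^ r
  else
    ∃ A B C : ℝ, A + B + C ≤ K ∧ (∀ x, |φ x| ≤ A) ∧
      (∀ x y : EuclideanSpace ℝ (Fin d), |φ x - φ y| ≤ B * ‖x - y‖) ∧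
      Differentiable ℝ φ ∧
      ∀ x y : EuclideanSpace ℝ (Fin d), x ≠ y →
        ‖fderiv ℝ φ x - fderiv ℝ φ y‖ ≤ C * ‖x - y‖ ^ (r - 1)

/-- Continuous Caputo derivative. -/
def caputo (α : ℝ) (φ : ℝ → ℝ) (t : ℝ) : ℝ :=
  (1 / Real.Gamma (1 - α)) *
    ((φ t - φ 0) / t ^ α + α * ∫ s in (0:ℝ)..t, (φ t - φ s) / (t - s) ^ (1 + α))

/-- Mittag-Leffler function `E_{α,β}`. -/
def mittagLeffler (α β z : ℝ) : ℝ := ∑' k : ℕ, z ^ k / Real.Gamma (α * k + β)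


/-!
The scheme obeys a discrete maximum principle. Solving the L1 formula for `U^n` gives
`U^n = Σ_k w_k U^k + c D L_h[U^n]` with `c = Γ(2-α) τ^α`, where the weights `w_k` of the past
values are nonnegative (the `b_i` decrease, by concavity of `t ↦ t^{1-α}`) and add up to
`b_0 = 1` (they telescope). Near a supremum `S` of `U^n` one has `L_h[U^n] ≤ 2 (S - U^n) Σ ω`,
and since `D` is bounded this forces `S` below the bound on the past values. Induction on `n`,
applied to `U` and to `-U`, gives the estimate.
-/

lemma bcoef_nonneg {α : ℝ} (hα : α ≤ 1) (i : ℕ) : 0 ≤ bcoef α i :=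
  sub_nonneg.2 (Real.rpow_le_rpow (Nat.cast_nonneg i) (by linarith) (by linarith))

lemma bcoef_zero {α : ℝ} (hα : α ≠ 1) : bcoef α 0 = 1 := by
  simp [bcoef, Real.zero_rpow (sub_ne_zero.2 hα.symm)]

lemma antitone_bcoef {α : ℝ} (hα0 : 0 ≤ α) (hα1 : α ≤ 1) : Antitone (bcoef α) := by
  refine antitone_nat_of_succ_le fun i => ?_
  have hconc := Real.concaveOn_rpow (by linarith : (0:ℝ) ≤ 1 - α) (by linarith)
  have hslope := hconc.slope_anti_adjacent
    (Set.mem_Ici.2 (Nat.cast_nonneg i)) (Set.mem_Ici.2 (by positivity : (0:ℝ) ≤ i + 2))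
    (lt_add_one (i : ℝ)) (by linarith : (i : ℝ) + 1 < i + 2)
  simp only [bcoef, Nat.cast_add, Nat.cast_one]
  norm_num [add_assoc, one_add_one_eq_two] at hslope ⊢
  linarith

lemma sum_Icc_sub_reflect {G : Type*} [AddCommGroup G] (f : ℕ → G) (n : ℕ) :
    ∑ k ∈ Finset.Icc 1 (n - 1), (f (n - k - 1) - f (n - k)) = f 0 - f (n - 1) := by
  rw [← Finset.sum_range_sub' f (n - 1), ← Finset.sum_range_reflect]
  refine Finset.sum_nbij' (· - 1) (· + 1) ?_ ?_ ?_ ?_ fun k hk => ?_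
  iterate 4 (intro k hk; simp only [Finset.mem_Icc, Finset.mem_range] at hk ⊢; omega)
  simp only [Finset.mem_Icc] at hk
  congr 2 <;> omega

def l1History (α : ℝ) (v : ℕ → ℝ) (n : ℕ) : ℝ :=
  bcoef α (n - 1) * v 0 +
    ∑ k ∈ Finset.Icc 1 (n - 1), (bcoef α (n - k - 1) - bcoef α (n - k)) * v k

lemma capD_eq_mul_sub_l1History (α τ : ℝ) (v : ℕ → ℝ) (n : ℕ) :
    capD α τ v n = τ ^ (-α) / Real.Gamma (2 - α) * (v n - l1History α v n) := by
  simp only [capD, l1History]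
  ring

lemma eq_l1History_add_of_capD_eq {α τ r : ℝ} {v : ℕ → ℝ} {n : ℕ} (hα : α < 2) (hτ : 0 < τ)
    (h : capD α τ v n = r) :
    v n = l1History α v n + Real.Gamma (2 - α) * τ ^ α * r := by
  have hΓ : 0 < Real.Gamma (2 - α) := Real.Gamma_pos_of_pos (by linarith)
  have hτα : 0 < τ ^ α := Real.rpow_pos_of_pos hτ α
  rw [capD_eq_mul_sub_l1History, Real.rpow_neg hτ.le] at h
  rw [← h]
  field_simp
  ring

lemma l1History_le {α M : ℝ} {v : ℕ → ℝ} {n : ℕ} (hα0 : 0 ≤ α) (hα1 : α < 1) (hn : 1 ≤ n)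
    (hv : ∀ k < n, v k ≤ M) : l1History α v n ≤ M := by
  have hweight : ∀ k ∈ Finset.Icc 1 (n - 1), 0 ≤ bcoef α (n - k - 1) - bcoef α (n - k) :=
    fun k _ => sub_nonneg.2 (antitone_bcoef hα0 hα1.le (by omega))
  calc l1History α v n
      ≤ bcoef α (n - 1) * M +
          ∑ k ∈ Finset.Icc 1 (n - 1), (bcoef α (n - k - 1) - bcoef α (n - k)) * M := by
        refine add_le_add (mul_le_mul_of_nonneg_left (hv 0 hn) (bcoef_nonneg hα1.le _))
          (Finset.sum_le_sum fun k hk => mul_le_mul_of_nonneg_left ?_ (hweight k hk))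
        exact hv k (by simp only [Finset.mem_Icc] at hk; omega)
    _ = M := by
        rw [← Finset.sum_mul, sum_Icc_sub_reflect, bcoef_zero hα1.ne]
        ring

lemma capD_neg (α τ : ℝ) (v : ℕ → ℝ) (n : ℕ) :
    capD α τ (fun m => -v m) n = -capD α τ v n := by
  simp only [capD, mul_neg, Finset.sum_neg_distrib]
  ring

section MaximumPrinciple

variable {d : ℕ} {h : ℝ} {ω : (Fin d → ℤ) → ℝ}

lemma Lh_neg (ψ : EuclideanSpace ℝ (Fin d) → ℝ) (x : EuclideanSpace ℝ (Fin d)) :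
    Lh d h ω (-ψ) x = -Lh d h ω ψ x := by
  simp only [Lh, Pi.neg_apply, ← tsum_neg]
  congr 1
  funext β
  ring

lemma Lh_le_of_le (hω0 : ∀ β, 0 ≤ ω β)
    (hωs : Summable (fun β : {β : Fin d → ℤ // β ≠ 0} => ω β.1))
    {ψ : EuclideanSpace ℝ (Fin d) → ℝ} {S : ℝ} (hψS : ∀ y, ψ y ≤ S) (x : EuclideanSpace ℝ (Fin d)) :
    Lh d h ω ψ x ≤ 2 * (S - ψ x) * ∑' β : {β : Fin d → ℤ // β ≠ 0}, ω β.1 := by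
  have hgap : 0 ≤ 2 * (S - ψ x) := by linarith [hψS x]
  have hterm : ∀ β : {β : Fin d → ℤ // β ≠ 0},
      (ψ (x + zvec d h β.1) + ψ (x - zvec d h β.1) - 2 * ψ x) * ω β.1 ≤ 2 * (S - ψ x) * ω β.1 :=
    fun β => mul_le_mul_of_nonneg_right
      (by linarith [hψS (x + zvec d h β.1), hψS (x - zvec d h β.1)]) (hω0 β.1)
  rw [← tsum_mul_left]
  -- this also covers non-summable terms, where `Lh` is `0` by the `tsum` convention
  refine tsum_le_of_sum_le' (tsum_nonneg fun β => mul_nonneg hgap (hω0 β.1)) fun s => ?_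
  exact (Finset.sum_le_sum fun β _ => hterm β).trans
    ((hωs.mul_left _).sum_le_tsum s fun β _ => mul_nonneg hgap (hω0 β.1))

theorem le_of_sub_mul_Lh_le (hω0 : ∀ β, 0 ≤ ω β)
    (hωs : Summable (fun β : {β : Fin d → ℤ // β ≠ 0} => ω β.1))
    {ψ a : EuclideanSpace ℝ (Fin d) → ℝ} {A M : ℝ} (hψ : BddAbove (Set.range ψ))
    (ha0 : ∀ x, 0 ≤ a x) (haA : ∀ x, a x ≤ A) (hψM : ∀ x, ψ x - a x * Lh d h ω ψ x ≤ M)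
    (x : EuclideanSpace ℝ (Fin d)) : ψ x ≤ M := by
  set S := ⨆ y, ψ y
  have hψS : ∀ y, ψ y ≤ S := le_ciSup hψ
  refine (hψS x).trans (le_of_not_gt fun hMS => ?_)
  set W := ∑' β : {β : Fin d → ℤ // β ≠ 0}, ω β.1
  have hW : 0 ≤ W := tsum_nonneg fun β => hω0 β.1
  have hA : 0 ≤ A := (ha0 x).trans (haA x)
  have hδ : 0 < (S - M) / (1 + 2 * A * W) := div_pos (by linarith) (by positivity)
  have hgap : ∀ y, ψ y ≤ S - (S - M) / (1 + 2 * A * W) := by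
    intro y
    have hSy : 0 ≤ 2 * (S - ψ y) * W := mul_nonneg (by linarith [hψS y]) hW
    have haL : a y * Lh d h ω ψ y ≤ A * (2 * (S - ψ y) * W) :=
      (mul_le_mul_of_nonneg_left (Lh_le_of_le hω0 hωs hψS y) (ha0 y)).trans
        (mul_le_mul_of_nonneg_right (haA y) hSy)
    rw [le_sub_comm, div_le_iff₀ (by positivity)]
    linarith [hψM y]
  linarith [ciSup_le hgap]

end MaximumPrinciple

section Scheme

variable {d : ℕ} {h τ α T : ℝ} {ω : (Fin d → ℤ) → ℝ} {D : EuclideanSpace ℝ (Fin d) → ℝ → ℝ}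
  {U : ℕ → EuclideanSpace ℝ (Fin d) → ℝ}

lemma SchemeSol.neg (hU : SchemeSol d h τ α T ω D U) : SchemeSol d h τ α T ω D (-U) := by
  refine ⟨fun n hn => ?_, fun n hn hnT x => ?_⟩
  · obtain ⟨M, hM⟩ := hU.1 n hn
    exact ⟨M, fun x => by simpa only [Pi.neg_apply, abs_neg] using hM x⟩
  · simp only [Pi.neg_apply]
    rw [capD_neg, Lh_neg, hU.2 n hn hnT x, mul_neg]

theorem SchemeSol.le_of_initial_le (hα : α ∈ Set.Ioo (0:ℝ) 1) (hτ : 0 < τ)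
    (hω0 : ∀ β, 0 ≤ ω β) (hωs : Summable (fun β : {β : Fin d → ℤ // β ≠ 0} => ω β.1))
    (hDbdd : ∃ M : ℝ, ∀ x t, t ∈ Set.Icc (0:ℝ) T → |D x t| ≤ M)
    (hDpos : ∀ x t, t ∈ Set.Icc (0:ℝ) T → 0 ≤ D x t)
    (hU : SchemeSol d h τ α T ω D U) {M : ℝ} (hM : ∀ x, U 0 x ≤ M) :
    ∀ n : ℕ, (n : ℝ) * τ ≤ T → ∀ x, U n x ≤ M := by
  obtain ⟨MD, hMD⟩ := hDbdd
  intro n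
  induction n using Nat.strong_induction_on with
  | _ n ih =>
  intro hnT
  rcases Nat.eq_zero_or_pos n with rfl | hn
  · exact hM
  have htn : (n : ℝ) * τ ∈ Set.Icc (0:ℝ) T := ⟨by positivity, hnT⟩
  set c := Real.Gamma (2 - α) * τ ^ α
  have hc : 0 ≤ c :=
    mul_nonneg (Real.Gamma_pos_of_pos (by linarith [hα.2])).le (Real.rpow_nonneg hτ.le α)
  obtain ⟨C, hC⟩ := hU.1 n hnT
  refine le_of_sub_mul_Lh_le (h := h) (a := fun x => c * D x (n * τ)) (A := c * MD) hω0 hωs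
    ⟨C, by rintro _ ⟨y, rfl⟩; exact le_of_abs_le (hC y)⟩ (fun x => mul_nonneg hc (hDpos x _ htn))
    (fun x => mul_le_mul_of_nonneg_left ((le_abs_self _).trans (hMD x _ htn)) hc) fun x => ?_
  have hpast : ∀ k < n, U k x ≤ M := fun k hk =>
    ih k hk ((mul_le_mul_of_nonneg_right (Nat.cast_le.2 hk.le) hτ.le).trans hnT) x
  have hrec := eq_l1History_add_of_capD_eq (by linarith [hα.2]) hτ (hU.2 n hn hnT x)
  have hhist := l1History_le hα.1.le hα.2 hn hpast
  rw [hrec, mul_assoc c]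
  linarith

end Scheme

theorem scheme_linfty_stability_general
    (d : ℕ) (h τ α T : ℝ) (ω : (Fin d → ℤ) → ℝ)
    (D : EuclideanSpace ℝ (Fin d) → ℝ → ℝ)
    (U : ℕ → EuclideanSpace ℝ (Fin d) → ℝ)
    (hα : α ∈ Set.Ioo (0:ℝ) 1) (hτ : 0 < τ)
    (hA1 : A1 d ω)
    (hDbdd : ∃ M : ℝ, ∀ x t, t ∈ Set.Icc (0:ℝ) T → |D x t| ≤ M)
    (hDpos : ∀ x t, t ∈ Set.Icc (0:ℝ) T → 0 ≤ D x t)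
    (hU : SchemeSol d h τ α T ω D U) :
    ∀ n : ℕ, (n : ℝ) * τ ≤ T →
      ∀ M : ℝ, (∀ x, |U 0 x| ≤ M) → ∀ x, |U n x| ≤ M := by
  obtain ⟨-, hω0, hωs⟩ := hA1
  intro n hnT M hM x
  have hupper := hU.le_of_initial_le hα hτ hω0 hωs hDbdd hDpos (fun y => le_of_abs_le (hM y))
  have hlower := hU.neg.le_of_initial_le hα hτ hω0 hωs hDbdd hDpos
    (fun y => neg_le.2 (neg_le_of_abs_le (hM y)))
  exact abs_le.2 ⟨neg_le.1 (hlower n hnT x), hupper n hnT x⟩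

/-- L∞-stability of the scheme (S). -/
theorem scheme_linfty_stability
    (d : ℕ) (h τ α T : ℝ) (ω : (Fin d → ℤ) → ℝ)
    (D : EuclideanSpace ℝ (Fin d) → ℝ → ℝ)
    (U : ℕ → EuclideanSpace ℝ (Fin d) → ℝ)
    (hα : α ∈ Set.Ioo (0:ℝ) 1) (hh : 0 < h) (hτ : 0 < τ) (hT : 0 < T)
    (hA1 : A1 d ω)
    (hDbdd : ∃ M : ℝ, ∀ x t, t ∈ Set.Icc (0:ℝ) T → |D x t| ≤ M)
    (hDpos : ∀ x t, t ∈ Set.Icc (0:ℝ) T → 0 ≤ D x t)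
    (hU : SchemeSol d h τ α T ω D U) :
    ∀ n : ℕ, (n : ℝ) * τ ≤ T →
      ∀ M : ℝ, (∀ x, |U 0 x| ≤ M) → ∀ x, |U n x| ≤ M :=
  scheme_linfty_stability_general d h τ α T ω D U hα hτ hA1 hDbdd hDpos hU

end
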